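/- Let k satisfy 2k ≥ d and let p be a polynomial. Then ⟨p, y^j⟩₁ = 0 for all 0 ≤ j ≤ 2k−1 if and only if both ⟨p, y^j⟩₁ = 0 for all 0 ≤ j ≤ d−2 and ⟨p, x^j⟩₂ = 0 for all 0 ≤ j ≤ 2k−d. -/

import Mathlib

open MeasureTheory Polynomial Filter Real

set_option linter.unusedSectionVars false

lemma aux_tendsto (f U : Polynomial ℝ) (h2 : 2 ≤ U.natDegree) (hl : 0 < U.leadingCoeff) :
    Tendsto (fun x => f.eval x * Real.exp (-U.eval x)) atTop (nhds 0) := by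
  have hXlt : (X : Polynomial ℝ).natDegree < U.natDegree := by
    simpa using lt_of_lt_of_le one_lt_two h2
  have hdeglt : (X : Polynomial ℝ).degree < U.degree := by
    apply Polynomial.degree_lt_degree; simpa using hXlt
  have hdeg : (U - X).natDegree = U.natDegree :=
    Polynomial.natDegree_sub_eq_left_of_natDegree_lt hXlt
  have hlc : (U - X).leadingCoeff = U.leadingCoeff :=
    Polynomial.leadingCoeff_sub_of_degree_lt hdeglt
  have hULX : Tendsto (fun x => (U - X).eval x) atTop atTop := by
    apply Polynomial.tendsto_atTop_of_leadingCoeff_nonneg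
    · rw [Polynomial.natDegree_pos_iff_degree_pos.symm, hdeg]; omega
    · rw [hlc]; exact hl.le
  have h1 : Tendsto (fun x => f.eval x / Real.exp x) atTop (nhds 0) :=
    Polynomial.tendsto_div_exp_atTop f
  have h2' : Tendsto (fun x => Real.exp (x - U.eval x)) atTop (nhds 0) := by
    have : Tendsto (fun x => x - U.eval x) atTop atBot := by
      have h := tendsto_neg_atTop_atBot.comp hULX
      convert h using 2 with x
      simp only [Function.comp_apply, Polynomial.eval_sub, Polynomial.eval_X]
      ring
    exact Real.tendsto_exp_atBot.comp this
  have key := h1.mul h2'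
  rw [zero_mul] at key
  convert key using 2 with x
  rw [div_mul_eq_mul_div, eq_div_iff (Real.exp_ne_zero x), mul_assoc, ← Real.exp_add]
  ring_nf

lemma integrableOn_Ioi_poly_exp (W f : Polynomial ℝ) (h2 : 2 ≤ W.natDegree)
    (hl : 0 < W.leadingCoeff) :
    IntegrableOn (fun x => f.eval x * Real.exp (-W.eval x)) (Set.Ioi 0) := by
  have hcont : Continuous fun x => f.eval x * Real.exp (-W.eval x) :=
    (f.continuous_aeval).mul (Real.continuous_exp.comp (W.continuous_aeval).neg)
  refine integrable_of_isBigO_exp_neg one_pos hcont.continuousOn ?_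
  have hXlt : (X : Polynomial ℝ).natDegree < W.natDegree := by
    simpa using lt_of_lt_of_le one_lt_two h2
  have hdeglt : (X : Polynomial ℝ).degree < W.degree := by
    apply Polynomial.degree_lt_degree; simpa using hXlt
  have hdeg : (W - X).natDegree = W.natDegree :=
    Polynomial.natDegree_sub_eq_left_of_natDegree_lt hXlt
  have hlc : (W - X).leadingCoeff = W.leadingCoeff :=
    Polynomial.leadingCoeff_sub_of_degree_lt hdeglt
  have ht := aux_tendsto f (W - X) (hdeg ▸ h2) (hlc ▸ hl)
  have hlo : (fun x => f.eval x * Real.exp (-W.eval x)) =o[atTop] fun x => Real.exp (-1 * x) := by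
    rw [Asymptotics.isLittleO_iff_tendsto (fun x h => absurd h (Real.exp_ne_zero _))]
    convert ht using 2 with x
    rw [div_eq_iff (Real.exp_ne_zero _), mul_assoc, ← Real.exp_add]
    congr 2
    simp only [Polynomial.eval_sub, Polynomial.eval_X]
    ring
  exact hlo.isBigO

lemma integrable_poly_exp (W f : Polynomial ℝ) (hE : Even W.natDegree)
    (h2 : 2 ≤ W.natDegree) (hl : 0 < W.leadingCoeff) :
    Integrable fun x => f.eval x * Real.exp (-W.eval x) := by
  rw [← integrableOn_univ, ← @Set.Iio_union_Ici _ _ (0 : ℝ), integrableOn_union,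
    integrableOn_Ici_iff_integrableOn_Ioi]
  refine ⟨?_, integrableOn_Ioi_poly_exp W f h2 hl⟩
  rw [← (Measure.measurePreserving_neg (volume : Measure ℝ)).integrableOn_comp_preimage
      (Homeomorph.neg ℝ).measurableEmbedding]
  simp only [Function.comp_def, Set.neg_preimage, Set.neg_Iio, neg_neg, neg_zero]
  have hXd : ((-X : Polynomial ℝ)).natDegree = 1 := by
    rw [Polynomial.natDegree_neg, Polynomial.natDegree_X]
  have hWn : (W.comp (-X)).natDegree = W.natDegree := by
    rw [Polynomial.natDegree_comp, hXd, mul_one]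
  have hlcn : (W.comp (-X)).leadingCoeff = W.leadingCoeff := by
    rw [Polynomial.leadingCoeff_comp (by rw [hXd]; norm_num)]
    rw [Polynomial.leadingCoeff_neg, Polynomial.leadingCoeff_X]
    rw [hE.neg_one_pow, mul_one]
  have := integrableOn_Ioi_poly_exp (W.comp (-X)) (f.comp (-X)) (hWn ▸ h2) (hlcn ▸ hl)
  convert this using 2 with x
  simp [Polynomial.eval_comp]

/-- The skew-inner product `⟨f,g⟩₁ = ∬ f(x) g(y) ε(x−y) e^{−V(x)−V(y)} dx dy`. -/
noncomputable def skewInner (V f g : Polynomial ℝ) : ℝ :=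
  ∫ p : ℝ × ℝ, f.eval p.1 * g.eval p.2 * Real.sign (p.1 - p.2) *
    Real.exp (-V.eval p.1 - V.eval p.2)

/-- The inner product `⟨f,g⟩₂ = ∫ f(x) g(x) e^{−2V(x)} dx`. -/
noncomputable def innerTwo (V f g : Polynomial ℝ) : ℝ :=
  ∫ x : ℝ, f.eval x * g.eval x * Real.exp (-2 * V.eval x)

lemma measurable_realSign : Measurable Real.sign := by
  have : Real.sign = fun r : ℝ => if r < 0 then (-1:ℝ) else if 0 < r then 1 else 0 := by
    funext r; rfl
  rw [this]
  exact Measurable.ite (measurableSet_lt measurable_id measurable_const) measurable_const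
    (Measurable.ite (measurableSet_lt measurable_const measurable_id) measurable_const
      measurable_const)

lemma abs_realSign (r : ℝ) : |Real.sign r| ≤ 1 := by
  rcases lt_trichotomy r 0 with h | h | h
  · rw [Real.sign_of_neg h]; norm_num
  · subst h; rw [Real.sign_zero]; norm_num
  · rw [Real.sign_of_pos h]; norm_num

section Main

variable (V : Polynomial ℝ) (hE : Even V.natDegree) (h2 : 2 ≤ V.natDegree)
  (hl : 0 < V.leadingCoeff)

/-- polynomial-times-weight -/
noncomputable def pwt (V f : Polynomial ℝ) (x : ℝ) : ℝ := f.eval x * Real.exp (-V.eval x)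

lemma continuous_pwt (f : Polynomial ℝ) : Continuous (pwt V f) :=
  (f.continuous_aeval).mul (Real.continuous_exp.comp (V.continuous_aeval).neg)

include hE h2 hl in
lemma integrable_pwt (f : Polynomial ℝ) : Integrable (pwt V f) :=
  integrable_poly_exp V f hE h2 hl

include hE h2 hl in
lemma integrable_skew_integrand (f g : Polynomial ℝ) :
    Integrable (fun z : ℝ × ℝ => f.eval z.1 * g.eval z.2 * Real.sign (z.1 - z.2) *
      Real.exp (-V.eval z.1 - V.eval z.2)) := by
  have hf := integrable_pwt V hE h2 hl f
  have hg := integrable_pwt V hE h2 hl g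
  have hprod : Integrable (fun z : ℝ × ℝ => pwt V f z.1 * pwt V g z.2) := by
    exact hf.mul_prod hg
  refine hprod.norm.mono' ?_ ?_
  · apply Measurable.aestronglyMeasurable
    refine Measurable.mul (Measurable.mul (Measurable.mul ?_ ?_) ?_) ?_
    · exact (f.continuous_aeval).measurable.comp measurable_fst
    · exact (g.continuous_aeval).measurable.comp measurable_snd
    · exact measurable_realSign.comp (measurable_fst.sub measurable_snd)
    · exact Real.continuous_exp.measurable.comp
        (((V.continuous_aeval).measurable.comp measurable_fst).neg.sub
          ((V.continuous_aeval).measurable.comp measurable_snd))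
  · refine Filter.Eventually.of_forall fun z => ?_
    have hexp : Real.exp (-V.eval z.1 - V.eval z.2) =
        Real.exp (-V.eval z.1) * Real.exp (-V.eval z.2) := by
      rw [← Real.exp_add]; ring_nf
    rw [Real.norm_eq_abs, hexp]
    have h1 : |f.eval z.1 * g.eval z.2 * Real.sign (z.1 - z.2) *
        (Real.exp (-V.eval z.1) * Real.exp (-V.eval z.2))|
        = |pwt V f z.1 * pwt V g z.2| * |Real.sign (z.1 - z.2)| := by
      rw [← abs_mul]; congr 1; unfold pwt; ring
    rw [h1]
    calc |pwt V f z.1 * pwt V g z.2| * |Real.sign (z.1 - z.2)|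
        ≤ |pwt V f z.1 * pwt V g z.2| * 1 :=
          mul_le_mul_of_nonneg_left (abs_realSign _) (abs_nonneg _)
      _ ≤ ‖pwt V f z.1 * pwt V g z.2‖ := by rw [mul_one]; rfl

noncomputable def Fsk (V f : Polynomial ℝ) (y : ℝ) : ℝ := ∫ x, pwt V f x * Real.sign (x - y)

include hE h2 hl in
lemma skew_repr (f g : Polynomial ℝ) :
    skewInner V f g = ∫ y, Fsk V f y * pwt V g y := by
  have hint := integrable_skew_integrand V hE h2 hl f g
  rw [skewInner, show (volume : Measure (ℝ × ℝ)) = (volume : Measure ℝ).prod volume from rfl,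
    MeasureTheory.integral_prod_symm _ hint]
  congr 1
  funext y
  have : (fun x => f.eval x * g.eval y * Real.sign (x - y) *
      Real.exp (-V.eval x - V.eval y)) =
      fun x => (pwt V f x * Real.sign (x - y)) * pwt V g y := by
    funext x
    rw [show -V.eval x - V.eval y = -V.eval x + -V.eval y by ring, Real.exp_add]
    unfold pwt; ring
  rw [this, MeasureTheory.integral_mul_const]
  rfl

include hE h2 hl in
lemma Fsk_eq (f : Polynomial ℝ) (y : ℝ) :
    Fsk V f y = (∫ x, pwt V f x) - 2 * ∫ x in Set.Iic y, pwt V f x := by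
  have hpw := integrable_pwt V hE h2 hl f
  have hind : Integrable (Set.indicator (Set.Iic y) (pwt V f)) :=
    hpw.indicator measurableSet_Iic
  have hae : ∀ᵐ x : ℝ, x ≠ y := by
    have h0 : (volume : Measure ℝ) {y} = 0 := measure_singleton y
    exact compl_mem_ae_iff.mpr h0
  have hcong : ∀ᵐ x : ℝ, pwt V f x * Real.sign (x - y) =
      pwt V f x - 2 * Set.indicator (Set.Iic y) (pwt V f) x := by
    filter_upwards [hae] with x hx
    rcases hx.lt_or_gt with h | h
    · rw [Real.sign_of_neg (by linarith : x - y < 0),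
        Set.indicator_of_mem (by simpa using h.le : x ∈ Set.Iic y)]
      ring
    · rw [Real.sign_of_pos (by linarith : 0 < x - y),
        Set.indicator_of_notMem (by simp [Set.mem_Iic]; linarith)]
      ring
  rw [Fsk, integral_congr_ae hcong,
    integral_sub hpw (hind.const_mul 2), MeasureTheory.integral_const_mul,
    integral_indicator measurableSet_Iic]

include hE h2 hl in
lemma Fsk_bound (f : Polynomial ℝ) (y : ℝ) :
    ‖Fsk V f y‖ ≤ ‖∫ x, pwt V f x‖ + 2 * ∫ x, ‖pwt V f x‖ := by
  have hpw := integrable_pwt V hE h2 hl f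
  rw [Fsk_eq V hE h2 hl f y]
  have h1 : ‖∫ x in Set.Iic y, pwt V f x‖ ≤ ∫ x, ‖pwt V f x‖ := by
    calc ‖∫ x in Set.Iic y, pwt V f x‖ ≤ ∫ x in Set.Iic y, ‖pwt V f x‖ :=
          norm_integral_le_integral_norm _
      _ ≤ ∫ x, ‖pwt V f x‖ :=
          setIntegral_le_integral hpw.norm
            (Filter.Eventually.of_forall fun x => norm_nonneg _)
  calc ‖(∫ x, pwt V f x) - 2 * ∫ x in Set.Iic y, pwt V f x‖
      ≤ ‖∫ x, pwt V f x‖ + ‖2 * ∫ x in Set.Iic y, pwt V f x‖ := norm_sub_le _ _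
    _ ≤ ‖∫ x, pwt V f x‖ + 2 * ∫ x, ‖pwt V f x‖ := by
        rw [norm_mul]
        simp only [Real.norm_ofNat]
        nlinarith [h1, norm_nonneg (∫ x in Set.Iic y, pwt V f x)]

include hE h2 hl in
lemma hasDerivAt_Fsk (f : Polynomial ℝ) (y : ℝ) :
    HasDerivAt (Fsk V f) (-2 * pwt V f y) y := by
  have hpw := integrable_pwt V hE h2 hl f
  have key : Fsk V f = fun z =>
      ((∫ x, pwt V f x) - 2 * ∫ x in Set.Iic (0:ℝ), pwt V f x) -
        2 * ∫ t in (0:ℝ)..z, pwt V f t := by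
    funext z
    rw [Fsk_eq V hE h2 hl f z]
    have hsub := intervalIntegral.integral_Iic_sub_Iic (f := pwt V f) (a := (0:ℝ)) (b := z)
      hpw.integrableOn hpw.integrableOn
    linarith
  have hI : HasDerivAt (fun z => ∫ t in (0:ℝ)..z, pwt V f t) (pwt V f y) y := by
    refine intervalIntegral.integral_hasDerivAt_right hpw.intervalIntegrable ?_ ?_
    · exact (continuous_pwt V f).stronglyMeasurable.stronglyMeasurableAtFilter
    · exact (continuous_pwt V f).continuousAt
  rw [key]
  have := (hI.const_mul (2:ℝ)).const_sub
    ((∫ x, pwt V f x) - 2 * ∫ x in Set.Iic (0:ℝ), pwt V f x)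
  refine this.congr_deriv ?_
  ring

include hE h2 hl in
lemma continuous_Fsk (f : Polynomial ℝ) : Continuous (Fsk V f) := by
  rw [continuous_iff_continuousAt]
  exact fun y => (hasDerivAt_Fsk V hE h2 hl f y).continuousAt

include hE h2 hl in
lemma tendsto_pwt_atTop (f : Polynomial ℝ) : Tendsto (pwt V f) atTop (nhds 0) :=
  aux_tendsto f V h2 hl

include hE h2 hl in
lemma tendsto_pwt_atBot (f : Polynomial ℝ) : Tendsto (pwt V f) atBot (nhds 0) := by
  have hXd : ((-X : Polynomial ℝ)).natDegree = 1 := by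
    rw [Polynomial.natDegree_neg, Polynomial.natDegree_X]
  have hWn : (V.comp (-X)).natDegree = V.natDegree := by
    rw [Polynomial.natDegree_comp, hXd, mul_one]
  have hlcn : (V.comp (-X)).leadingCoeff = V.leadingCoeff := by
    rw [Polynomial.leadingCoeff_comp (by rw [hXd]; norm_num),
      Polynomial.leadingCoeff_neg, Polynomial.leadingCoeff_X, hE.neg_one_pow, mul_one]
  have h := aux_tendsto (f.comp (-X)) (V.comp (-X)) (hWn ▸ h2) (hlcn ▸ hl)
  have h2' := h.comp tendsto_neg_atBot_atTop
  have heq : pwt V f =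
      (fun x => Polynomial.eval x (f.comp (-X)) * Real.exp (-Polynomial.eval x (V.comp (-X)))) ∘
        Neg.neg := by
    funext x
    simp [pwt, Function.comp, Polynomial.eval_comp]
  rw [heq]
  exact h2'

include hE h2 hl in
lemma skew_deriv (f q : Polynomial ℝ) :
    skewInner V f (derivative q - V.derivative * q) = 2 * innerTwo V f q := by
  set dq : Polynomial ℝ := derivative q - V.derivative * q with hdq
  -- facts about 2V
  have h2V_deg : (Polynomial.C (2:ℝ) * V).natDegree = V.natDegree :=
    Polynomial.natDegree_C_mul two_ne_zero
  have h2V_lc : 0 < (Polynomial.C (2:ℝ) * V).leadingCoeff := by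
    rw [Polynomial.leadingCoeff_mul, Polynomial.leadingCoeff_C]
    positivity
  have hGF'_int : Integrable (fun y => pwt V q y * (-2 * pwt V f y)) := by
    have hI := integrable_poly_exp (Polynomial.C (2:ℝ) * V) (f * q)
      (h2V_deg ▸ hE) (h2V_deg ▸ h2) h2V_lc
    have heq : (fun y => pwt V q y * (-2 * pwt V f y)) =
        fun y => (-2 : ℝ) * ((f * q).eval y * Real.exp (-(Polynomial.C (2:ℝ) * V).eval y)) := by
      funext y
      simp only [pwt, Polynomial.eval_mul, Polynomial.eval_C]
      rw [show -(2 * V.eval y) = -V.eval y + -V.eval y by ring, Real.exp_add]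
      ring
    rw [heq]
    exact hI.const_mul _
  have hFbdd : ∃ C, ∀ y, ‖Fsk V f y‖ ≤ C :=
    ⟨‖∫ x, pwt V f x‖ + 2 * ∫ x, ‖pwt V f x‖, Fsk_bound V hE h2 hl f⟩
  have hG'F_int : Integrable (fun y => pwt V dq y * Fsk V f y) := by
    have := (integrable_pwt V hE h2 hl dq).bdd_mul
      ((continuous_Fsk V hE h2 hl f).aestronglyMeasurable) (Filter.Eventually.of_forall hFbdd.choose_spec)
    convert this using 1
    funext y; ring
  have hderiv : ∀ y, HasDerivAt (fun z => pwt V q z * Fsk V f z)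
      (pwt V dq y * Fsk V f y + pwt V q y * (-2 * pwt V f y)) y := by
    intro y
    have hq' : HasDerivAt (fun z => pwt V q z) (pwt V dq y) y := by
      have hqa := q.hasDerivAt y
      have hVa := (((V.hasDerivAt y)).neg).exp
      have := hqa.mul hVa
      refine this.congr_deriv ?_
      simp only [pwt, hdq, Polynomial.eval_sub, Polynomial.eval_mul, Pi.neg_apply]
      ring
    exact hq'.mul (hasDerivAt_Fsk V hE h2 hl f y)
  have htop : Tendsto (fun z => pwt V q z * Fsk V f z) atTop (nhds 0) := by
    obtain ⟨C, hC⟩ := hFbdd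
    apply squeeze_zero_norm (a := fun z => ‖pwt V q z‖ * C)
    · intro z
      rw [norm_mul]
      exact mul_le_mul_of_nonneg_left (hC z) (norm_nonneg _)
    · have := (tendsto_pwt_atTop V hE h2 hl q).norm.mul_const C
      simpa using this
  have hbot : Tendsto (fun z => pwt V q z * Fsk V f z) atBot (nhds 0) := by
    obtain ⟨C, hC⟩ := hFbdd
    apply squeeze_zero_norm (a := fun z => ‖pwt V q z‖ * C)
    · intro z
      rw [norm_mul]
      exact mul_le_mul_of_nonneg_left (hC z) (norm_nonneg _)
    · have := (tendsto_pwt_atBot V hE h2 hl q).norm.mul_const C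
      simpa using this
  have hzero : ∫ y, (pwt V dq y * Fsk V f y + pwt V q y * (-2 * pwt V f y)) = 0 := by
    rw [MeasureTheory.integral_of_hasDerivAt_of_tendsto hderiv
      (hG'F_int.add hGF'_int) hbot htop]
    ring
  rw [MeasureTheory.integral_add hG'F_int hGF'_int] at hzero
  have hsnd : ∫ y, pwt V q y * (-2 * pwt V f y) = -2 * innerTwo V f q := by
    rw [innerTwo, ← MeasureTheory.integral_const_mul]
    congr 1
    funext y
    simp only [pwt]
    rw [show (-2 : ℝ) * V.eval y = -V.eval y + -V.eval y by ring, Real.exp_add]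
    ring
  have hfst : skewInner V f dq = ∫ y, pwt V dq y * Fsk V f y := by
    rw [skew_repr V hE h2 hl f dq]
    congr 1
    funext y
    ring
  rw [hfst]
  rw [hsnd] at hzero
  linarith

include hE h2 hl in
lemma skew_sum (f q : Polynomial ℝ) (n : ℕ) (hn : q.natDegree < n) :
    skewInner V f q = ∑ i ∈ Finset.range n, q.coeff i * skewInner V f (X ^ i) := by
  have hrepr : (fun z : ℝ × ℝ => f.eval z.1 * q.eval z.2 * Real.sign (z.1 - z.2) *
      Real.exp (-V.eval z.1 - V.eval z.2)) =
      fun z => ∑ i ∈ Finset.range n, q.coeff i *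
        (f.eval z.1 * (X ^ i : Polynomial ℝ).eval z.2 * Real.sign (z.1 - z.2) *
          Real.exp (-V.eval z.1 - V.eval z.2)) := by
    funext z
    rw [Polynomial.eval_eq_sum_range' hn z.2]
    simp only [Polynomial.eval_pow, Polynomial.eval_X]
    rw [Finset.mul_sum, Finset.sum_mul, Finset.sum_mul]
    apply Finset.sum_congr rfl
    intros; ring
  rw [skewInner, hrepr, MeasureTheory.integral_finset_sum]
  · apply Finset.sum_congr rfl
    intro i _
    rw [MeasureTheory.integral_const_mul]
    rfl
  · intro i _
    exact (integrable_skew_integrand V hE h2 hl f (X ^ i)).const_mul _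

end Main

lemma dq_natDegree_le (V : Polynomial ℝ) (h2 : 2 ≤ V.natDegree) (m : ℕ) :
    (derivative (X ^ m : Polynomial ℝ) - V.derivative * X ^ m).natDegree
      ≤ m + V.natDegree - 1 := by
  apply le_trans (Polynomial.natDegree_sub_le _ _)
  apply max_le
  · apply le_trans (Polynomial.natDegree_derivative_le _)
    rw [Polynomial.natDegree_X_pow]
    omega
  · apply le_trans (Polynomial.natDegree_mul_le)
    rw [Polynomial.natDegree_X_pow]
    have := Polynomial.natDegree_derivative_le V
    omega

lemma dq_coeff (V : Polynomial ℝ) (h2 : 2 ≤ V.natDegree) (m : ℕ) :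
    (derivative (X ^ m : Polynomial ℝ) - V.derivative * X ^ m).coeff
      (m + V.natDegree - 1) = -(V.natDegree * V.leadingCoeff) := by
  rw [Polynomial.coeff_sub]
  have hc1 : (derivative (X ^ m : Polynomial ℝ)).coeff (m + V.natDegree - 1) = 0 := by
    apply Polynomial.coeff_eq_zero_of_natDegree_lt
    have := Polynomial.natDegree_derivative_le (X ^ m : Polynomial ℝ)
    rw [Polynomial.natDegree_X_pow] at this
    omega
  have hc2 : (V.derivative * X ^ m).coeff (m + V.natDegree - 1)
      = V.natDegree * V.leadingCoeff := by
    have hrw : m + V.natDegree - 1 = (V.natDegree - 1) + m := by omega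
    rw [hrw, Polynomial.coeff_mul_X_pow, Polynomial.coeff_derivative]
    rw [show V.natDegree - 1 + 1 = V.natDegree by omega, Polynomial.coeff_natDegree]
    rw [show ((V.natDegree - 1 : ℕ) : ℝ) + 1 = (V.natDegree : ℝ) by
      rw [Nat.cast_sub (by omega)]; push_cast; ring]
    ring
  rw [hc1, hc2]
  ring

/-- For `2k ≥ d`: `⟨p, y^j⟩₁ = 0` for all `0 ≤ j ≤ 2k−1` if and only if
`⟨p, y^j⟩₁ = 0` for all `0 ≤ j ≤ d−2` and `⟨p, x^j⟩₂ = 0` for all `0 ≤ j ≤ 2k−d`. -/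
theorem skew_orthogonality_split
    (V : Polynomial ℝ) (hEven : Even V.natDegree) (hdeg : 2 ≤ V.natDegree)
    (hlc : 0 < V.leadingCoeff) (k : ℕ) (hk : V.natDegree ≤ 2 * k)
    (p : Polynomial ℝ) :
    (∀ j < 2 * k, skewInner V p (X ^ j) = 0) ↔
      ((∀ j : ℕ, j + 2 ≤ V.natDegree → skewInner V p (X ^ j) = 0) ∧
       (∀ j : ℕ, j + V.natDegree ≤ 2 * k → innerTwo V p (X ^ j) = 0)) := by
  have hdℓ : (V.natDegree : ℝ) * V.leadingCoeff ≠ 0 := by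
    have h0 : (0:ℝ) < (V.natDegree : ℝ) := by exact_mod_cast (by omega : 0 < V.natDegree)
    exact ne_of_gt (mul_pos h0 hlc)
  constructor
  · intro H
    constructor
    · intro j hj
      exact H j (by omega)
    · intro j hj
      have hsd := skew_deriv V hEven hdeg hlc p (X ^ j)
      have hlt : (derivative (X ^ j : Polynomial ℝ) - V.derivative * X ^ j).natDegree < 2 * k :=
        lt_of_le_of_lt (dq_natDegree_le V hdeg j) (by omega)
      rw [skew_sum V hEven hdeg hlc p _ (2 * k) hlt] at hsd
      rw [Finset.sum_eq_zero (fun i hi => by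
        rw [H i (Finset.mem_range.mp hi), mul_zero])] at hsd
      linarith
  · rintro ⟨Ha, Hb⟩ j
    induction j using Nat.strong_induction_on with
    | _ j IH =>
      intro hj
      by_cases hcase : j + 2 ≤ V.natDegree
      · exact Ha j hcase
      · push_neg at hcase
        set m := j + 1 - V.natDegree with hm
        have hmd : m + V.natDegree - 1 = j := by omega
        have hsd := skew_deriv V hEven hdeg hlc p (X ^ m)
        have hinner : innerTwo V p (X ^ m) = 0 := Hb m (by omega)
        rw [hinner, mul_zero] at hsd
        have hlt : (derivative (X ^ m : Polynomial ℝ) - V.derivative * X ^ m).natDegree < j + 1 := by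
          have := dq_natDegree_le V hdeg m
          omega
        rw [skew_sum V hEven hdeg hlc p _ (j + 1) hlt] at hsd
        rw [Finset.sum_range_succ] at hsd
        rw [Finset.sum_eq_zero (fun i hi => by
          have hij := Finset.mem_range.mp hi
          rw [IH i hij (by omega), mul_zero]), zero_add] at hsd
        have hcj : (derivative (X ^ m : Polynomial ℝ) - V.derivative * X ^ m).coeff j
            = -(V.natDegree * V.leadingCoeff) := by
          rw [← hmd]; exact dq_coeff V hdeg m
        rw [hcj] at hsd
        rcases mul_eq_zero.mp hsd with h | h
        · exact absurd (neg_eq_zero.mp h) hdℓ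
        · exact h
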